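/- Let α be a nonempty finite type and p : α → ℝ a probability distribution with p x > 0 for every x. Then there exists an injective prefix-free binary code C : α → List Bool whose expected length is within one bit of the entropy: ∑_x p x · (C x).length < H(p) + 1, where H(p) = −∑_x p x · logb 2 (p x). -/

import Mathlib

/-!
Take Shannon's lengths `ℓ x = ⌈log₂ (1 / p x)⌉`. Then `2 ^ (-ℓ x) ≤ p x`, so the lengths satisfy
Kraft's inequality `∑ 2 ^ (-ℓ x) ≤ 1`, and `ℓ x < log₂ (1 / p x) + 1`, so the expected length is
below `H(p) + 1`. Conversely, lengths `ℓ₀ ≤ ℓ₁ ≤ ⋯` satisfying Kraft's inequality are realised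
by a prefix-free code: the `i`-th codeword is the first `ℓᵢ` binary digits of the cumulative sum
`cᵢ = ∑_{j < i} 2 ^ (-ℓⱼ) < 1`. The dyadic intervals `[cᵢ, cᵢ + 2 ^ (-ℓᵢ))` these digits
describe are disjoint, which is exactly prefix-freeness.
-/

open Real Finset

def PrefixFree {α β : Type*} (C : α → List β) : Prop :=
  ∀ x y, x ≠ y → ¬ C x <+: C y

namespace PrefixFree

variable {α β γ : Type*} {C : α → List β}

theorem injective (hC : PrefixFree C) : Function.Injective C := by
  intro x y hxy
  by_contra hne
  exact hC x y hne (hxy ▸ List.prefix_refl _)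

theorem comp {f : γ → α} (hC : PrefixFree C) (hf : Function.Injective f) : PrefixFree (C ∘ f) :=
  fun x y hxy => hC (f x) (f y) (hf.ne hxy)

end PrefixFree

def binaryWord (ℓ a : ℕ) : List Bool :=
  (List.range ℓ).map fun k => a.testBit (ℓ - 1 - k)

@[simp]
theorem length_binaryWord (ℓ a : ℕ) : (binaryWord ℓ a).length = ℓ := by
  simp [binaryWord]

theorem take_binaryWord {k ℓ : ℕ} (a : ℕ) (hk : k ≤ ℓ) :
    (binaryWord ℓ a).take k = binaryWord k (a / 2 ^ (ℓ - k)) := by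
  rw [binaryWord, binaryWord, ← List.map_take, List.take_range, min_eq_left hk]
  refine List.map_congr_left fun i hi => ?_
  rw [Nat.testBit_div_two_pow]
  congr 1
  have := List.mem_range.1 hi
  omega

theorem binaryWord_injOn (ℓ : ℕ) : Set.InjOn (binaryWord ℓ) (Set.Iio (2 ^ ℓ)) := by
  intro a ha b hb hab
  refine Nat.eq_of_testBit_eq fun i => ?_
  rcases lt_or_ge i ℓ with hi | hi
  · have := congrArg (fun w => w.getD (ℓ - 1 - i) false) hab
    simpa [binaryWord, List.getD_eq_getElem?_getD, show ℓ - 1 - i < ℓ by omega,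
      show ℓ - 1 - (ℓ - 1 - i) = i by omega] using this
  · rw [Nat.testBit_lt_two_pow (lt_of_lt_of_le ha (Nat.pow_le_pow_right two_pos hi)),
      Nat.testBit_lt_two_pow (lt_of_lt_of_le hb (Nat.pow_le_pow_right two_pos hi))]

theorem div_two_pow_eq_of_binaryWord_prefix {ℓ₁ ℓ₂ a₁ a₂ : ℕ} (ha₁ : a₁ < 2 ^ ℓ₁)
    (ha₂ : a₂ < 2 ^ ℓ₂) (h : binaryWord ℓ₁ a₁ <+: binaryWord ℓ₂ a₂) :
    ℓ₁ ≤ ℓ₂ ∧ a₂ / 2 ^ (ℓ₂ - ℓ₁) = a₁ := by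
  have hle : ℓ₁ ≤ ℓ₂ := by simpa using h.length_le
  refine ⟨hle, binaryWord_injOn ℓ₁ ?_ ha₁ ?_⟩
  · refine Nat.div_lt_of_lt_mul ?_
    rwa [← pow_add, Nat.sub_add_cancel hle]
  · rw [← take_binaryWord a₂ hle, List.prefix_iff_eq_take.1 h, length_binaryWord]

section Kraft

variable {ι : Type*} [LinearOrder ι] [LocallyFiniteOrderBot ι] (ℓ : ι → ℕ)

/-- `2 ^ (-ℓ i) * kraftOffset ℓ i = ∑_{j < i} 2 ^ (-ℓ j)`, an integer when `ℓ` is monotone. -/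
def kraftOffset (i : ι) : ℕ :=
  ∑ j ∈ Iio i, 2 ^ (ℓ i - ℓ j)

theorem kraftOffset_add_one (i : ι) : kraftOffset ℓ i + 1 = ∑ j ∈ Iic i, 2 ^ (ℓ i - ℓ j) := by
  rw [Iic_eq_cons_Iio, sum_cons, kraftOffset, Nat.sub_self, pow_zero, add_comm]

variable {ℓ}

theorem kraftOffset_lt_two_pow [Fintype ι] (hℓ : Monotone ℓ)
    (hkraft : ∑ j, ((2 : ℝ) ^ ℓ j)⁻¹ ≤ 1) (i : ι) : kraftOffset ℓ i < 2 ^ ℓ i := by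
  rw [← Nat.add_one_le_iff, ← Nat.cast_le (α := ℝ), kraftOffset_add_one]
  calc ((∑ j ∈ Iic i, 2 ^ (ℓ i - ℓ j) : ℕ) : ℝ)
      = 2 ^ ℓ i * ∑ j ∈ Iic i, ((2 : ℝ) ^ ℓ j)⁻¹ := by
        push_cast
        rw [mul_sum]
        exact sum_congr rfl fun j hj => pow_sub₀ _ two_ne_zero (hℓ (mem_Iic.1 hj))
    _ ≤ 2 ^ ℓ i * 1 := by
        gcongr
        exact (sum_le_sum_of_subset_of_nonneg (subset_univ _) fun _ _ _ => by positivity).trans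
          hkraft
    _ = ((2 ^ ℓ i : ℕ) : ℝ) := by push_cast; ring

theorem add_one_mul_two_pow_le_kraftOffset (hℓ : Monotone ℓ) {i j : ι} (hij : i < j) :
    (kraftOffset ℓ i + 1) * 2 ^ (ℓ j - ℓ i) ≤ kraftOffset ℓ j := by
  rw [kraftOffset_add_one, sum_mul]
  calc ∑ k ∈ Iic i, 2 ^ (ℓ i - ℓ k) * 2 ^ (ℓ j - ℓ i) = ∑ k ∈ Iic i, 2 ^ (ℓ j - ℓ k) := by
        refine sum_congr rfl fun k hk => ?_
        have hki := hℓ (mem_Iic.1 hk)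
        have hij := hℓ hij.le
        rw [← pow_add]
        congr 1
        omega
    _ ≤ kraftOffset ℓ j :=
        sum_le_sum_of_subset fun k hk => mem_Iio.2 ((mem_Iic.1 hk).trans_lt hij)

theorem prefixFree_binaryWord_kraftOffset [Fintype ι] (hℓ : Monotone ℓ)
    (hkraft : ∑ j, ((2 : ℝ) ^ ℓ j)⁻¹ ≤ 1) :
    PrefixFree fun i => binaryWord (ℓ i) (kraftOffset ℓ i) := by
  intro i j hij hpre
  obtain ⟨hle, hdiv⟩ := div_two_pow_eq_of_binaryWord_prefix (kraftOffset_lt_two_pow hℓ hkraft i)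
    (kraftOffset_lt_two_pow hℓ hkraft j) hpre
  rcases hij.lt_or_gt with h | h
  · have := add_one_mul_two_pow_le_kraftOffset hℓ h
    rw [← Nat.le_div_iff_mul_le (by positivity), hdiv] at this
    omega
  · have := add_one_mul_two_pow_le_kraftOffset hℓ h
    rw [le_antisymm (hℓ h.le) hle, Nat.sub_self, pow_zero] at this hdiv
    omega

end Kraft

theorem exists_prefixFree_length_eq_of_kraft {ι : Type*} [Fintype ι] (ℓ : ι → ℕ)
    (hkraft : ∑ i, ((2 : ℝ) ^ ℓ i)⁻¹ ≤ 1) :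
    ∃ C : ι → List Bool, PrefixFree C ∧ ∀ i, (C i).length = ℓ i := by
  set g := (Fintype.equivFin ι).symm
  set e := (Tuple.sort (ℓ ∘ g)).trans g
  have hmono : Monotone (ℓ ∘ e) := Tuple.monotone_sort (ℓ ∘ g)
  have hkraft' : ∑ i, ((2 : ℝ) ^ (ℓ ∘ e) i)⁻¹ ≤ 1 :=
    (Equiv.sum_comp e fun i => ((2 : ℝ) ^ ℓ i)⁻¹).trans_le hkraft
  refine ⟨(fun i => binaryWord ((ℓ ∘ e) i) (kraftOffset (ℓ ∘ e) i)) ∘ e.symm,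
    (prefixFree_binaryWord_kraftOffset hmono hkraft').comp e.symm.injective, fun i => ?_⟩
  simp

theorem inv_two_pow_ceil_logb_inv_le {q : ℝ} (hq : 0 < q) : ((2 : ℝ) ^ ⌈logb 2 q⁻¹⌉₊)⁻¹ ≤ q := by
  rw [inv_le_comm₀ (by positivity) hq, ← rpow_natCast,
    ← logb_le_iff_le_rpow one_lt_two (inv_pos.2 hq)]
  exact Nat.le_ceil _

theorem ceil_logb_inv_lt {q : ℝ} (hq : 0 < q) (hq₁ : q ≤ 1) :
    (⌈logb 2 q⁻¹⌉₊ : ℝ) < -logb 2 q + 1 :=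
  logb_inv 2 q ▸ Nat.ceil_lt_add_one (logb_nonneg one_lt_two ((one_le_inv₀ hq).2 hq₁))

theorem exists_prefix_code_within_one_bit_general
    {α : Type*} [Fintype α]
    (p : α → ℝ) (hp : ∀ x, 0 < p x) (hsum : ∑ x, p x = 1) :
    ∃ C : α → List Bool,
      Function.Injective C ∧
      (∀ x y, x ≠ y → ¬ (C x <+: C y)) ∧
      ∑ x, p x * ((C x).length : ℝ) < (-∑ x, p x * logb 2 (p x)) + 1 := by
  have hp₁ : ∀ x, p x ≤ 1 := fun x => hsum ▸ single_le_sum (fun y _ => (hp y).le) (mem_univ x)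
  obtain ⟨C, hC, hlen⟩ := exists_prefixFree_length_eq_of_kraft (fun x => ⌈logb 2 (p x)⁻¹⌉₊)
    ((sum_le_sum fun x _ => inv_two_pow_ceil_logb_inv_le (hp x)).trans hsum.le)
  refine ⟨C, hC.injective, hC, ?_⟩
  calc ∑ x, p x * ((C x).length : ℝ) < ∑ x, p x * (-logb 2 (p x) + 1) := by
        refine sum_lt_sum_of_nonempty (nonempty_of_sum_ne_zero (hsum ▸ one_ne_zero)) fun x _ => ?_
        rw [hlen]
        exact mul_lt_mul_of_pos_left (ceil_logb_inv_lt (hp x) (hp₁ x)) (hp x)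
    _ = (-∑ x, p x * logb 2 (p x)) + 1 := by
        simp only [mul_add, mul_neg, mul_one, sum_add_distrib, sum_neg_distrib, hsum]

/-- Existence of a near-optimal prefix code: for any everywhere-positive
probability distribution on a nonempty finite type there is an injective
prefix-free binary code whose expected length is less than `H(p) + 1`. -/
theorem exists_prefix_code_within_one_bit
    {α : Type*} [Fintype α] [Nonempty α]
    (p : α → ℝ) (hp : ∀ x, 0 < p x) (hsum : ∑ x, p x = 1) :
    ∃ C : α → List Bool,
      Function.Injective C ∧
      (∀ x y, x ≠ y → ¬ (C x <+: C y)) ∧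
      ∑ x, p x * ((C x).length : ℝ) < (-∑ x, p x * logb 2 (p x)) + 1 :=
  exists_prefix_code_within_one_bit_general p hp hsum
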